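/- Let D = [U′,U] × [V′,V] ⊂ ℝ², let r, Ω : D → ℝ be C² with Ω > 0 and 0 < r₀ ≤ r ≤ R on D, and let G : D → ℝ be continuous with G ≥ 0. Suppose r ∂_u∂_v r = −(1/4)Ω² − (∂_u r)(∂_v r) + G on D. Then ∫_{V′}^{V} ∫_{U′}^{U} G(u,v) du dv ≤ (R² − r₀²) + (1/4) ∫_{V′}^{V} ∫_{U′}^{U} Ω²(u,v) du dv. -/

import Mathlib

/-!
Since `r ∂_v r = ∂_v (r² / 2)`, the wave equation says `∂_u ∂_v (r² / 2) = G - Ω² / 4`.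
Integrating this mixed derivative over the rectangle leaves only the corner values,
`∫∫ (G - Ω² / 4) = ½ (r²(U,V) - r²(U,V') - r²(U',V) + r²(U',V'))`, and `r₀ ≤ r ≤ R` bounds the
right-hand side by `R² - r₀²`.
-/

open Set intervalIntegral

open Function Filter Topology

section PartialDerivatives

variable {r : ℝ → ℝ → ℝ} {s : Set (ℝ × ℝ)} {u v : ℝ}

theorem hasDerivWithinAt_curry_snd {t : Set ℝ} (hr : DifferentiableWithinAt ℝ (uncurry r) s (u, v))
    (ht : ∀ v' ∈ t, (u, v') ∈ s) :
    HasDerivWithinAt (fun v' => r u v') (fderivWithin ℝ (uncurry r) s (u, v) (0, 1)) t v :=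
  hr.hasFDerivWithinAt.comp_hasDerivWithinAt v
    ((hasDerivAt_const v u).prodMk (hasDerivAt_id v)).hasDerivWithinAt ht

theorem deriv_curry_snd (hr : DifferentiableAt ℝ (uncurry r) (u, v)) :
    deriv (fun v' => r u v') v = fderiv ℝ (uncurry r) (u, v) (0, 1) :=
  (hr.hasFDerivAt.comp_hasDerivAt v ((hasDerivAt_const v u).prodMk (hasDerivAt_id v))).deriv

theorem eventually_deriv_curry_snd_eq (hr : ContDiffAt ℝ 1 (uncurry r) (u, v)) :
    ∀ᶠ u' in 𝓝 u, deriv (fun v' => r u' v') v = fderiv ℝ (uncurry r) (u', v) (0, 1) :=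
  ((Continuous.prodMk_left v).tendsto u).eventually <| (hr.eventually (by simp)).mono fun _ hp =>
    deriv_curry_snd (hp.differentiableAt one_ne_zero)

theorem differentiableAt_deriv_curry_snd (hr : ContDiffAt ℝ 2 (uncurry r) (u, v)) :
    DifferentiableAt ℝ (fun u' => deriv (fun v' => r u' v') v) u := by
  have h : DifferentiableAt ℝ (fun u' => fderiv ℝ (uncurry r) (u', v) (0, 1)) u :=
    (((hr.fderiv_right (m := 1) (by norm_num)).differentiableAt one_ne_zero).comp u
      (by fun_prop)).clm_apply (differentiableAt_const _)
  exact h.congr_of_eventuallyEq (eventually_deriv_curry_snd_eq (hr.of_le one_le_two))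

theorem hasDerivAt_mul_fderivWithin_curry_snd (hr : ContDiffOn ℝ 2 (uncurry r) s)
    (hs : s ∈ 𝓝 (u, v)) :
    HasDerivAt (fun u' => r u' v * fderivWithin ℝ (uncurry r) s (u', v) (0, 1))
      (deriv (fun u' => r u' v) u * deriv (fun v' => r u v') v +
        r u v * deriv (fun u' => deriv (fun v' => r u' v') v) u) u := by
  have hr' := hr.contDiffAt hs
  have h_eq : ∀ᶠ u' in 𝓝 u,
      fderivWithin ℝ (uncurry r) s (u', v) (0, 1) = deriv (fun v' => r u' v') v := by
    filter_upwards [((Continuous.prodMk_left v).tendsto u).eventually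
      (eventually_mem_nhds_iff.2 hs), eventually_deriv_curry_snd_eq (hr'.of_le one_le_two)]
      with u' hs' hderiv
    rw [fderivWithin_of_mem_nhds hs', hderiv]
  have hru : DifferentiableAt ℝ (fun u' => r u' v) u :=
    (hr'.differentiableAt two_ne_zero).comp (f := fun u' : ℝ => (u', v)) u (by fun_prop)
  exact (hru.hasDerivAt.mul (differentiableAt_deriv_curry_snd hr').hasDerivAt).congr_of_eventuallyEq
    (h_eq.mono fun _ h => by simp only [h, Pi.mul_apply])

end PartialDerivatives

section RectangleIntegrals

variable {a b c d : ℝ}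

theorem continuousOn_intervalIntegral_of_continuousOn_prod {E : Type*} [NormedAddCommGroup E]
    [NormedSpace ℝ E] {f : ℝ → ℝ → E} (hab : a ≤ b) (hcd : c ≤ d)
    (hf : ContinuousOn (uncurry f) (Icc a b ×ˢ Icc c d)) :
    ContinuousOn (fun v => ∫ u in a..b, f u v) (Icc c d) := by
  let f' : ℝ → ℝ → E := fun v u => f (projIcc a b hab u) (projIcc c d hcd v)
  have hf' : Continuous (uncurry f') :=
    hf.comp_continuous
      (f := fun p : ℝ × ℝ => ((projIcc a b hab p.2 : ℝ), (projIcc c d hcd p.1 : ℝ))) (by fun_prop)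
      fun _ => ⟨Subtype.prop _, Subtype.prop _⟩
  refine (continuous_parametric_intervalIntegral_of_continuous' hf' a b).continuousOn.congr
    fun v hv => integral_congr fun u hu => ?_
  simp [f', projIcc_of_mem hab (uIcc_of_le hab ▸ hu), projIcc_of_mem hcd hv]

theorem integral_integral_sub_of_continuousOn {f g : ℝ → ℝ → ℝ} (hab : a ≤ b) (hcd : c ≤ d)
    (hf : ContinuousOn (uncurry f) (Icc a b ×ˢ Icc c d))
    (hg : ContinuousOn (uncurry g) (Icc a b ×ˢ Icc c d)) :
    ∫ v in c..d, ∫ u in a..b, (f u v - g u v) =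
      (∫ v in c..d, ∫ u in a..b, f u v) - ∫ v in c..d, ∫ u in a..b, g u v := by
  rw [← integral_sub
    ((continuousOn_intervalIntegral_of_continuousOn_prod hab hcd hf).intervalIntegrable_of_Icc hcd)
    ((continuousOn_intervalIntegral_of_continuousOn_prod hab hcd hg).intervalIntegrable_of_Icc hcd)]
  refine integral_congr fun v hv => integral_sub ?_ ?_
  · exact (hf.uncurry_right v (uIcc_of_le hcd ▸ hv)).intervalIntegrable_of_Icc hab
  · exact (hg.uncurry_right v (uIcc_of_le hcd ▸ hv)).intervalIntegrable_of_Icc hab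

theorem integral_integral_eq_of_hasDerivAt {φ ψ g : ℝ → ℝ → ℝ} (hab : a ≤ b) (hcd : c ≤ d)
    (hφ : ∀ u ∈ Icc a b, ContinuousOn (φ u) (Icc c d))
    (hφψ : ∀ u ∈ Icc a b, ∀ v ∈ Ioo c d, HasDerivAt (φ u) (ψ u v) v)
    (hψ : ContinuousOn (uncurry ψ) (Icc a b ×ˢ Icc c d))
    (hψg : ∀ u ∈ Ioo a b, ∀ v ∈ Ioo c d, HasDerivAt (ψ · v) (g u v) u)
    (hg : ContinuousOn (uncurry g) (Icc a b ×ˢ Icc c d)) :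
    ∫ v in c..d, ∫ u in a..b, g u v = φ b d - φ b c - (φ a d - φ a c) := by
  have h_outer : ∀ u ∈ Icc a b, ∫ v in c..d, ψ u v = φ u d - φ u c := fun u hu =>
    integral_eq_sub_of_hasDerivAt_of_le hcd (hφ u hu) (hφψ u hu)
      ((hψ.uncurry_left u hu).intervalIntegrable_of_Icc hcd)
  have hb : b ∈ Icc a b := right_mem_Icc.2 hab
  have ha : a ∈ Icc a b := left_mem_Icc.2 hab
  calc ∫ v in c..d, ∫ u in a..b, g u v = ∫ v in c..d, (ψ b v - ψ a v) :=
        integral_congr_Ioo_of_le hcd fun v hv =>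
          integral_eq_sub_of_hasDerivAt_of_le hab (hψ.uncurry_right v (Ioo_subset_Icc_self hv))
            (fun u hu => hψg u hu v hv)
            ((hg.uncurry_right v (Ioo_subset_Icc_self hv)).intervalIntegrable_of_Icc hab)
    _ = φ b d - φ b c - (φ a d - φ a c) := by
        rw [integral_sub ((hψ.uncurry_left b hb).intervalIntegrable_of_Icc hcd)
          ((hψ.uncurry_left a ha).intervalIntegrable_of_Icc hcd), h_outer b hb, h_outer a ha]

end RectangleIntegrals

theorem spacetime_integral_estimate_general
    (U' U V' V r₀ R : ℝ) (hU : U' ≤ U) (hV : V' ≤ V)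
    (r Ω G : ℝ → ℝ → ℝ)
    (hrC2 : ContDiffOn ℝ 2 (fun p : ℝ × ℝ => r p.1 p.2) (Icc U' U ×ˢ Icc V' V))
    (hΩC2 : ContDiffOn ℝ 2 (fun p : ℝ × ℝ => Ω p.1 p.2) (Icc U' U ×ˢ Icc V' V))
    (hr₀ : 0 < r₀)
    (hrlow : ∀ u ∈ Icc U' U, ∀ v ∈ Icc V' V, r₀ ≤ r u v)
    (hrhigh : ∀ u ∈ Icc U' U, ∀ v ∈ Icc V' V, r u v ≤ R)
    (hGcont : ContinuousOn (fun p : ℝ × ℝ => G p.1 p.2) (Icc U' U ×ˢ Icc V' V))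
    (hwave : ∀ u ∈ Icc U' U, ∀ v ∈ Icc V' V,
      r u v * deriv (fun u' => deriv (fun v' => r u' v') v) u =
        -(1 / 4) * (Ω u v) ^ 2
          - (deriv (fun u' => r u' v) u) * (deriv (fun v' => r u v') v) + G u v) :
    (∫ v in V'..V, ∫ u in U'..U, G u v) ≤
      (R ^ 2 - r₀ ^ 2) + (1 / 4) * ∫ v in V'..V, ∫ u in U'..U, (Ω u v) ^ 2 := by
  have hsq : ∀ u ∈ Icc U' U, ∀ v ∈ Icc V' V, r₀ ^ 2 ≤ r u v ^ 2 ∧ r u v ^ 2 ≤ R ^ 2 :=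
    fun u hu v hv => ⟨pow_le_pow_left₀ hr₀.le (hrlow u hu v hv) 2,
      pow_le_pow_left₀ (hr₀.le.trans (hrlow u hu v hv)) (hrhigh u hu v hv) 2⟩
  have hU'_mem := left_mem_Icc.2 hU
  have hU_mem := right_mem_Icc.2 hU
  have hV'_mem := left_mem_Icc.2 hV
  have hV_mem := right_mem_Icc.2 hV
  rcases hU.eq_or_lt with rfl | hUlt
  · simp only [integral_same, integral_zero]
    linarith [hsq U' hU_mem V hV_mem]
  rcases hV.eq_or_lt with rfl | hVlt
  · simp only [integral_same]
    linarith [hsq U hU_mem V' hV_mem]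
  set D := Icc U' U ×ˢ Icc V' V
  have hΩsq : ContinuousOn (uncurry fun u v => 1 / 4 * Ω u v ^ 2) D :=
    continuousOn_const.mul (hΩC2.continuousOn.pow 2)
  -- `∂_v r` is taken within the closed rectangle, so that it is continuous up to its boundary,
  -- where the two-sided `deriv` of the wave equation need not exist.
  have hrv (u) (hu : u ∈ Icc U' U) (v) (hv : v ∈ Ioo V' V) :
      HasDerivAt (fun v' => r u v') (fderivWithin ℝ (uncurry r) D (u, v) (0, 1)) v :=
    (hasDerivWithinAt_curry_snd (hrC2.differentiableOn two_ne_zero (u, v)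
      ⟨hu, Ioo_subset_Icc_self hv⟩) fun _ hv' => ⟨hu, hv'⟩).hasDerivAt (Icc_mem_nhds hv.1 hv.2)
  have hcorners := integral_integral_eq_of_hasDerivAt hU hV
    (φ := fun u v => r u v ^ 2 / 2)
    (ψ := fun u v => r u v * fderivWithin ℝ (uncurry r) D (u, v) (0, 1))
    (g := fun u v => G u v - 1 / 4 * Ω u v ^ 2)
    (fun u hu => ((hrC2.continuousOn.uncurry_left u hu).pow 2).div_const 2)
    (fun u hu v hv => (((hrv u hu v hv).pow 2).div_const 2).congr_deriv (by ring))
    (hrC2.continuousOn.mul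
      ((hrC2.continuousOn_fderivWithin ((uniqueDiffOn_Icc hUlt).prod (uniqueDiffOn_Icc hVlt))
        one_le_two).clm_apply continuousOn_const))
    (fun u hu v hv => (hasDerivAt_mul_fderivWithin_curry_snd hrC2
      (prod_mem_nhds (Icc_mem_nhds hu.1 hu.2) (Icc_mem_nhds hv.1 hv.2))).congr_deriv
        (by linarith [hwave u (Ioo_subset_Icc_self hu) v (Ioo_subset_Icc_self hv)]))
    (hGcont.fun_sub hΩsq)
  rw [integral_integral_sub_of_continuousOn hU hV hGcont hΩsq] at hcorners
  simp only [integral_const_mul] at hcorners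
  linarith [hsq U hU_mem V hV_mem, hsq U hU_mem V' hV'_mem, hsq U' hU'_mem V hV_mem,
    hsq U' hU'_mem V' hV'_mem]

/-- Fundamental a priori spacetime integral estimate: from the wave equation
`r ∂_u∂_v r = −Ω²/4 − (∂_u r)(∂_v r) + G` with `G ≥ 0` and `r₀ ≤ r ≤ R`, the spacetime
integral of `G` is bounded by `(R² − r₀²) + ¼ ∫∫ Ω²`. -/
theorem spacetime_integral_estimate
    (U' U V' V r₀ R : ℝ) (hU : U' ≤ U) (hV : V' ≤ V)
    (r Ω G : ℝ → ℝ → ℝ)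
    (hrC2 : ContDiffOn ℝ 2 (fun p : ℝ × ℝ => r p.1 p.2) (Icc U' U ×ˢ Icc V' V))
    (hΩC2 : ContDiffOn ℝ 2 (fun p : ℝ × ℝ => Ω p.1 p.2) (Icc U' U ×ˢ Icc V' V))
    (hΩpos : ∀ u ∈ Icc U' U, ∀ v ∈ Icc V' V, 0 < Ω u v)
    (hr₀ : 0 < r₀)
    (hrlow : ∀ u ∈ Icc U' U, ∀ v ∈ Icc V' V, r₀ ≤ r u v)
    (hrhigh : ∀ u ∈ Icc U' U, ∀ v ∈ Icc V' V, r u v ≤ R)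
    (hGcont : ContinuousOn (fun p : ℝ × ℝ => G p.1 p.2) (Icc U' U ×ˢ Icc V' V))
    (hGpos : ∀ u ∈ Icc U' U, ∀ v ∈ Icc V' V, 0 ≤ G u v)
    (hwave : ∀ u ∈ Icc U' U, ∀ v ∈ Icc V' V,
      r u v * deriv (fun u' => deriv (fun v' => r u' v') v) u =
        -(1 / 4) * (Ω u v) ^ 2
          - (deriv (fun u' => r u' v) u) * (deriv (fun v' => r u v') v) + G u v) :
    (∫ v in V'..V, ∫ u in U'..U, G u v) ≤
      (R ^ 2 - r₀ ^ 2) + (1 / 4) * ∫ v in V'..V, ∫ u in U'..U, (Ω u v) ^ 2 :=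
  spacetime_integral_estimate_general U' U V' V r₀ R hU hV r Ω G hrC2 hΩC2 hr₀ hrlow hrhigh hGcont
    hwave
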